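/- arXiv:1411.3959 — 3 statements merged into one kernel-verified Lean document; each statement's English description precedes it below -/
import Mathlib

section
/- Let H: T*Q → ℝ be a Hamiltonian with Hamiltonian vector field X_H, λ a closed 1-form on Q, and X_H^λ = Tπ_Q ∘ X_H ∘ λ the projected vector field on Q. Then X_H^λ and X_H are λ-related (i.e., Tλ ∘ X_H^λ = X_H ∘ λ) if and only if d(H ∘ λ) = 0. -/
/-- Theorem `th:hj:intrinsic`: with `X_H^λ = Tπ_Q ∘ X_H ∘ λ`
(so `X_H^λ(q)ᵅ = (∂H/∂p_α)(q, λ(q))`), the vector fields `X_H^λ` and `X_H` are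
`λ`-related iff `d(H ∘ λ) = 0`.  `λ`-relatedness means
`Tλ ∘ X_H^λ = X_H ∘ λ`; since the base components agree automatically, it
amounts to the fiber components of `Tλ(X_H^λ)` matching `-∂H/∂qᵅ`. -/
theorem stmt6 (n : ℕ) (H : ((Fin n → ℝ) × (Fin n → ℝ)) → ℝ) (hH : ContDiff ℝ (⊤ : ℕ∞) H)
    (lam : (Fin n → ℝ) → (Fin n → ℝ)) (hlam : ContDiff ℝ (⊤ : ℕ∞) lam)
    (hclosed : ∀ (q : Fin n → ℝ) (i j : Fin n),
      fderiv ℝ (fun q' => lam q' i) q (Pi.single j 1) =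
        fderiv ℝ (fun q' => lam q' j) q (Pi.single i 1)) :
    ((∀ (q : Fin n → ℝ) (α : Fin n),
        fderiv ℝ (fun q' => lam q' α) q
            (fun β => fderiv ℝ H (q, lam q) (0, Pi.single β 1)) =
          - fderiv ℝ H (q, lam q) (Pi.single α 1, 0)) ↔
      (∀ q : Fin n → ℝ, fderiv ℝ (fun q' => H (q', lam q')) q = 0)) := by
  have hHd : Differentiable ℝ H := hH.differentiable (by simp)
  have hlamd : Differentiable ℝ lam := hlam.differentiable (by simp)
  -- expansion of a continuous linear functional on Fin n → ℝ over the basis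
  have expand : ∀ (L : (Fin n → ℝ) →L[ℝ] ℝ) (v : Fin n → ℝ),
      L v = ∑ β, v β * L (Pi.single β 1) := by
    intro L v
    have hv : v = ∑ β, v β • (Pi.single β 1 : Fin n → ℝ) := by
      funext j
      simp [Finset.sum_apply, Pi.single_apply]
    calc L v = L (∑ β, v β • (Pi.single β 1 : Fin n → ℝ)) := by rw [← hv]
      _ = ∑ β, v β * L (Pi.single β 1) := by
          rw [map_sum]
          simp [smul_eq_mul]
  -- coordinate derivative of lam
  have hlamco : ∀ (β : Fin n) (q v : Fin n → ℝ),
      fderiv ℝ (fun q' => lam q' β) q v = fderiv ℝ lam q v β := by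
    intro β q v
    have h1 : (fun q' => lam q' β) =
        (ContinuousLinearMap.proj β : (Fin n → ℝ) →L[ℝ] ℝ) ∘ lam := rfl
    rw [h1, fderiv_comp q (ContinuousLinearMap.proj β).differentiableAt (hlamd q),
      ContinuousLinearMap.fderiv]
    rfl
  -- the key chain-rule identity
  have key : ∀ (q : Fin n → ℝ) (α : Fin n),
      fderiv ℝ (fun q' => H (q', lam q')) q (Pi.single α 1) =
        fderiv ℝ H (q, lam q) (Pi.single α 1, 0) +
          ∑ β, fderiv ℝ (fun q' => lam q' β) q (Pi.single α 1) *
            fderiv ℝ H (q, lam q) (0, Pi.single β 1) := by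
    intro q α
    have hpair : DifferentiableAt ℝ
        (fun q' : Fin n → ℝ => ((q', lam q') : (Fin n → ℝ) × (Fin n → ℝ))) q :=
      differentiableAt_id.prodMk (hlamd q)
    have hcomp : fderiv ℝ (fun q' => H (q', lam q')) q =
        (fderiv ℝ H (q, lam q)).comp
          ((ContinuousLinearMap.id ℝ (Fin n → ℝ)).prod (fderiv ℝ lam q)) := by
      have h1 : (fun q' => H (q', lam q')) =
          H ∘ (fun q' : Fin n → ℝ => (q', lam q')) := rfl
      rw [h1, fderiv_comp q (hHd _) hpair]
      congr 1
      have := DifferentiableAt.fderiv_prodMk (𝕜 := ℝ)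
        (f₁ := fun q' : Fin n → ℝ => q') (f₂ := lam) (x := q)
        differentiableAt_id (hlamd q)
      rw [this, fderiv_id']
    rw [hcomp]
    set L := fderiv ℝ H (q, lam q) with hL
    set v := fderiv ℝ lam q (Pi.single α 1) with hv
    have happ : (L.comp
        ((ContinuousLinearMap.id ℝ (Fin n → ℝ)).prod (fderiv ℝ lam q)))
          (Pi.single α 1) = L (Pi.single α 1, v) := rfl
    rw [happ]
    have hsplit : ((Pi.single α 1, v) : (Fin n → ℝ) × (Fin n → ℝ)) =
        (Pi.single α 1, 0) + (0, v) := by simp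
    rw [hsplit, map_add]
    congr 1
    -- L (0, v) = ∑ β, v β * L (0, single β 1)
    have hv2 : ((0, v) : (Fin n → ℝ) × (Fin n → ℝ)) =
        ∑ β, v β • ((0, Pi.single β (1:ℝ)) : (Fin n → ℝ) × (Fin n → ℝ)) := by
      refine Prod.ext ?_ ?_
      · simp [Prod.fst_sum]
      · simp only [Prod.snd_sum, Prod.smul_snd]
        funext j
        simp [Finset.sum_apply, Pi.single_apply]
    rw [hv2, map_sum]
    refine Finset.sum_congr rfl fun β _ => ?_
    rw [map_smul, smul_eq_mul, hlamco]
  constructor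
  · -- λ-related → d(H∘λ) = 0
    intro hrel q
    ext1 v
    rw [expand _ v]
    simp only [ContinuousLinearMap.zero_apply]
    refine Finset.sum_eq_zero fun α _ => ?_
    have h1 := key q α
    have h2 := hrel q α
    rw [expand _ (fun β => fderiv ℝ H (q, lam q) (0, Pi.single β 1))] at h2
    have h3 : ∑ β, fderiv ℝ (fun q' => lam q' β) q (Pi.single α 1) *
        fderiv ℝ H (q, lam q) (0, Pi.single β 1) =
        - fderiv ℝ H (q, lam q) (Pi.single α 1, 0) := by
      rw [← h2]
      refine Finset.sum_congr rfl fun β _ => ?_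
      rw [hclosed q β α, mul_comm]
    rw [h3] at h1
    rw [h1]
    ring
  · -- d(H∘λ) = 0 → λ-related
    intro hzero q α
    have h1 := key q α
    rw [hzero q] at h1
    simp only [ContinuousLinearMap.zero_apply] at h1
    rw [expand _ (fun β => fderiv ℝ H (q, lam q) (0, Pi.single β 1))]
    have h3 : ∑ β, (fun β => fderiv ℝ H (q, lam q) (0, Pi.single β 1)) β *
        fderiv ℝ (fun q' => lam q' α) q (Pi.single β 1) =
        ∑ β, fderiv ℝ (fun q' => lam q' β) q (Pi.single α 1) *
          fderiv ℝ H (q, lam q) (0, Pi.single β 1) := by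
      refine Finset.sum_congr rfl fun β _ => ?_
      rw [hclosed q α β, mul_comm]
    rw [h3]
    linarith [h1]
end

section
/- Let π: E → M be a fiber bundle with dim M = m+1 and fix a volume form η on M. There is a bundle isomorphism Ψ: Mπ = Λ^{m+1}_2 E → J¹π^† over E, characterized by ⟨Ψ(ω), j¹_x φ⟩ η_x = φ*_x(ω) for all ω ∈ Λ^{m+1}_2 E over φ(x) and all jets j¹_x φ, identifying the bundle of 2-horizontal (m+1)-forms with the affine dual of J¹π. -/
/-!
Restricted to the graph `j ↦ (v j, γ (v j))` of a linear `γ : V → W`, a form `ω` becomes a top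
form on `V`, hence equals `Ψ ω γ · det v`, where `Ψ ω γ` is its value on the graph of `γ` over a
basis; this pins `Ψ` down. Writing `(v, γ v) = (v, 0) + (0, γ v)` and expanding multilinearly,
every term with two vertical arguments vanishes, so `Ψ ω` is a constant plus a linear function of
`γ`. Conversely `det ∘ fst` and the determinants with the `k`-th column replaced by the `a`-th
fibre coordinate are 2-horizontal and realise the constant and the matrix entries `(γ e_k)_a`, so
every affine map is reached. For injectivity, a 2-horizontal form is determined by its values on
basis families with at most one vertical vector, and each such family is the difference of the
graphs of `γ` and of `0` over a suitable frame.
-/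

open Finset Function

theorem MultilinearMap.map_add_eq_add_sum_update {R ι N : Type*} {M : ι → Type*}
    [CommSemiring R] [∀ i, AddCommMonoid (M i)] [∀ i, Module R (M i)] [AddCommMonoid N]
    [Module R N] [Fintype ι] [DecidableEq ι] (f : MultilinearMap R M N) (x y : ∀ i, M i)
    (h : ∀ s : Finset ι, 1 < #sᶜ → f (s.piecewise x y) = 0) :
    f (x + y) = f x + ∑ i, f (update x i (y i)) := by
  have hsub : ∀ s : Finset ι, s ∉ insert univ (univ.image (fun i : ι => {i}ᶜ)) →
      f (s.piecewise x y) = 0 := by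
    refine fun s hs => h s (not_le.mp fun hle => hs ?_)
    rcases Nat.le_one_iff_eq_zero_or_eq_one.mp hle with h0 | h1
    · exact mem_insert.mpr (Or.inl (compl_eq_bot.mp (card_eq_zero.mp h0)))
    · obtain ⟨i, hi⟩ := card_eq_one.mp h1
      exact mem_insert_of_mem (mem_image.mpr ⟨i, mem_univ i, by rw [← hi, compl_compl]⟩)
  have huniv : univ ∉ univ.image fun i : ι => {i}ᶜ := by
    simp
  rw [f.map_add_univ, ← sum_subset (subset_univ _) fun s _ hs => hsub s hs,
    sum_insert huniv, sum_image fun i _ j _ hij => singleton_injective (compl_injective hij)]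
  rw [piecewise_univ]
  exact congrArg _ (sum_congr rfl fun i _ => by rw [Finset.compl_singleton, piecewise_erase_univ])

theorem AlternatingMap.map_eq_zero_of_eq_smul {R M N ι : Type*} [CommSemiring R]
    [AddCommMonoid M] [Module R M] [AddCommMonoid N] [Module R N]
    (f : M [⋀^ι]→ₗ[R] N) {v : ι → M} {p q : ι} (hpq : p ≠ q) (s : M) {a b : R}
    (hp : v p = a • s) (hq : v q = b • s) : f v = 0 := by
  classical
  have hv : v = update (update v p (a • s)) q (b • s) := by
    rw [← hp, ← hq, update_eq_self, update_eq_self]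
  rw [hv, f.map_update_smul, update_comm hpq, f.map_update_smul,
    f.map_eq_zero_of_eq _ (i := p) (j := q) (by simp [hpq.symm]) hpq, smul_zero, smul_zero]

theorem AlternatingMap.finset_sum_apply {R M N ι α : Type*} [Semiring R] [AddCommMonoid M]
    [Module R M] [AddCommMonoid N] [Module R N] (s : Finset α) (f : α → M [⋀^ι]→ₗ[R] N) (v : ι → M) :
    (∑ a ∈ s, f a) v = ∑ a ∈ s, f a v :=
  map_sum (⟨⟨fun f => f v, rfl⟩, fun _ _ => rfl⟩ : (M [⋀^ι]→ₗ[R] N) →+ N) f s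

namespace AlternatingMap

section TwoHorizontal

variable {R V W N ι : Type*} [CommRing R] [AddCommGroup V] [Module R V] [AddCommGroup W]
  [Module R W] [AddCommGroup N] [Module R N]

/-- The fibre of `Λ^{m+1}_2 E` at a point with `T_uE = V × W` and vertical subspace `W`. -/
def twoHorizontal : Submodule R ((V × W) [⋀^ι]→ₗ[R] N) where
  carrier := {ω | ∀ X : ι → V × W, (∃ a b, a ≠ b ∧ (X a).1 = 0 ∧ (X b).1 = 0) → ω X = 0}
  add_mem' h₁ h₂ X hX := by simp [h₁ X hX, h₂ X hX]
  zero_mem' _ _ := rfl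
  smul_mem' c ω h X hX := by simp [h X hX]

theorem map_graph_eq_mul_det [Fintype ι] [DecidableEq ι] (b : Module.Basis ι R V)
    (ω : (V × W) [⋀^ι]→ₗ[R] R) (γ : V →ₗ[R] W) (v : ι → V) :
    ω (fun j => (v j, γ (v j))) = ω (fun j => (b j, γ (b j))) * b.det v := by
  have := (ω.compLinearMap (LinearMap.id.prod γ)).eq_smul_basis_det b
  simpa [mul_comm] using congrArg (· v) this

theorem map_eq_add_sum_update_of_mem_twoHorizontal [Fintype ι] [DecidableEq ι]
    {ω : (V × W) [⋀^ι]→ₗ[R] N} (hω : ω ∈ twoHorizontal) (v : ι → V) (y : ι → W) :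
    ω (fun j => (v j, y j)) =
      ω (fun j => (v j, 0)) + ∑ i, ω (update (fun j => (v j, 0)) i (0, y i)) := by
  have hsplit : (fun j => (v j, y j)) = (fun j => (v j, 0)) + fun j => (0, y j) := by
    ext <;> simp
  rw [hsplit]
  refine ω.toMultilinearMap.map_add_eq_add_sum_update _ _ fun s hs => hω _ ?_
  obtain ⟨p, hp, q, hq, hpq⟩ := one_lt_card.mp hs
  exact ⟨p, q, hpq, by simp [mem_compl.mp hp], by simp [mem_compl.mp hq]⟩

theorem exists_affineMap_of_mem_twoHorizontal [Fintype ι] [DecidableEq ι]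
    {ω : (V × W) [⋀^ι]→ₗ[R] N} (hω : ω ∈ twoHorizontal) (v : ι → V) :
    ∃ g : (V →ₗ[R] W) →ᵃ[R] N, (fun γ : V →ₗ[R] W => ω (fun j => (v j, γ (v j)))) = ⇑g := by
  set x : ι → V × W := fun j => (v j, 0)
  refine ⟨(∑ i, ω.toMultilinearMap.toLinearMap x i ∘ₗ LinearMap.inr R V W ∘ₗ
    LinearMap.applyₗ (v i)).toAffineMap + AffineMap.const R _ (ω x), funext fun γ => ?_⟩
  rw [map_eq_add_sum_update_of_mem_twoHorizontal hω]
  simp [x, add_comm]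

theorem map_update_inr_eq_zero [DecidableEq ι] {ω : (V × W) [⋀^ι]→ₗ[R] N}
    (h : ∀ (γ : V →ₗ[R] W) (v : ι → V), ω (fun j => (v j, γ (v j))) = 0)
    (u : ι → V) (i : ι) (γ : V →ₗ[R] W) (hγ : ∀ j ≠ i, γ (u j) = 0) :
    ω (update (fun j => (u j, 0)) i (0, γ (u i))) = 0 := by
  have hgraph : (fun j => (u j, γ (u j))) =
      update (fun j => (u j, 0)) i ((u i, 0) + (0, γ (u i))) := by
    funext j
    rcases eq_or_ne j i with rfl | hj
    · simp
    · simp [hj, hγ j hj]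
  have hzero : ω (fun j => (u j, 0)) = 0 := by simpa using h 0 u
  have := h γ u
  rwa [hgraph, ω.map_update_add, update_eq_self, hzero, zero_add] at this

theorem map_update_basis_inr_eq_zero [Fintype ι] [DecidableEq ι] (b : Module.Basis ι R V)
    {ω : (V × W) [⋀^ι]→ₗ[R] N}
    (h : ∀ (γ : V →ₗ[R] W) (v : ι → V), ω (fun j => (v j, γ (v j))) = 0)
    (τ : ι → ι) (i : ι) (w : W) :
    ω (update (fun j => (b (τ j), 0)) i (0, w)) = 0 := by
  have hcard : #((univ.erase i).image τ) < #(univ : Finset ι) :=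
    card_image_le.trans_lt (card_erase_lt_of_mem (mem_univ i))
  obtain ⟨k₀, -, hk₀⟩ := exists_mem_notMem_of_card_lt_card hcard
  -- in the frame `b ∘ τ` with slot `i` replaced by `b k₀`, only slot `i` is seen by `b.coord k₀`
  have := map_update_inr_eq_zero h (update (b ∘ τ) i (b k₀)) i ((b.coord k₀).smulRight w)
    fun j hj => by
      have : τ j ≠ k₀ := fun hj' => hk₀ (mem_image.mpr ⟨j, mem_erase.mpr ⟨hj, mem_univ j⟩, hj'⟩)
      simp [hj, this.symm]
  convert this using 2
  funext j
  rcases eq_or_ne j i with rfl | hj <;> simp [*]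

theorem eq_zero_of_map_graph_eq_zero [Fintype ι] [DecidableEq ι] {κ : Type*}
    (b : Module.Basis ι R V) (c : Module.Basis κ R W) {ω : (V × W) [⋀^ι]→ₗ[R] N}
    (hω : ω ∈ twoHorizontal)
    (h : ∀ (γ : V →ₗ[R] W) (v : ι → V), ω (fun j => (v j, γ (v j))) = 0) :
    ω = 0 := by
  refine (b.prod c).ext_alternating fun σ _ => ?_
  rw [zero_apply]
  by_cases hvert : ∃ i a, σ i = Sum.inr a
  · obtain ⟨i, a, hi⟩ := hvert
    by_cases hvert₂ : ∃ j ≠ i, ∃ a', σ j = Sum.inr a'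
    · obtain ⟨j, hji, a', hj⟩ := hvert₂
      exact hω _ ⟨i, j, hji.symm, by simp [hi], by simp [hj]⟩
    push Not at hvert₂
    set τ : ι → ι := fun j => Sum.elim id (fun _ => i) (σ j)
    have hτ : ∀ j ≠ i, σ j = Sum.inl (τ j) := fun j hj => by
      cases hσ : σ j with
      | inl k => simp [τ, hσ]
      | inr a' => exact absurd hσ (hvert₂ j hj a')
    convert map_update_basis_inr_eq_zero b h τ i (c a) using 2
    funext j
    rcases eq_or_ne j i with rfl | hj
    · simp [hi]
    · simp [hj, hτ j hj]
  · push Not at hvert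
    have hhor : ∀ j, ∃ k, σ j = Sum.inl k := fun j => by
      cases hσ : σ j with
      | inl k => exact ⟨k, rfl⟩
      | inr a => exact absurd hσ (hvert j a)
    choose τ hτ using hhor
    convert h 0 (b ∘ τ) using 2
    funext j
    simp [hτ j]

theorem eq_of_map_graph_eq [Fintype ι] [DecidableEq ι] {κ : Type*}
    (b : Module.Basis ι R V) (c : Module.Basis κ R W) {ω₁ ω₂ : (V × W) [⋀^ι]→ₗ[R] R}
    (h₁ : ω₁ ∈ twoHorizontal) (h₂ : ω₂ ∈ twoHorizontal)
    (h : ∀ γ : V →ₗ[R] W, ω₁ (fun j => (b j, γ (b j))) = ω₂ (fun j => (b j, γ (b j)))) :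
    ω₁ = ω₂ := by
  refine sub_eq_zero.mp (eq_zero_of_map_graph_eq_zero b c (sub_mem h₁ h₂) fun γ v => ?_)
  rw [sub_apply, map_graph_eq_mul_det b ω₁, map_graph_eq_mul_det b ω₂, h γ, sub_self]

end TwoHorizontal

section Coordinates

variable {R ι κ : Type*} [CommRing R] [Fintype ι] [DecidableEq ι]

def updateFstSnd (k : ι) (a : κ) : (ι → R) × (κ → R) →ₗ[R] ι → R where
  toFun p := update p.1 k (p.2 a)
  map_add' p q := by
    funext l
    rcases eq_or_ne l k with rfl | hl <;> simp [*]
  map_smul' r p := by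
    funext l
    rcases eq_or_ne l k with rfl | hl <;> simp [*]

variable (R ι κ) in
noncomputable def detFst : ((ι → R) × (κ → R)) [⋀^ι]→ₗ[R] R :=
  Matrix.detRowAlternating.compLinearMap (LinearMap.fst R _ _)

variable (R) in
noncomputable def detUpdateFstSnd (k : ι) (a : κ) : ((ι → R) × (κ → R)) [⋀^ι]→ₗ[R] R :=
  Matrix.detRowAlternating.compLinearMap (updateFstSnd k a)

theorem detFst_mem_twoHorizontal : detFst R ι κ ∈ twoHorizontal :=
  fun _ ⟨p, _, _, hp, _⟩ => Matrix.detRowAlternating.map_coord_zero p hp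

theorem detUpdateFstSnd_mem_twoHorizontal (k : ι) (a : κ) :
    detUpdateFstSnd R k a ∈ twoHorizontal := by
  rintro X ⟨p, q, hpq, hp, hq⟩
  have hvert : ∀ j, (X j).1 = 0 → updateFstSnd k a (X j) = (X j).2 a • Pi.single k 1 := by
    intro j hj
    funext l
    rcases eq_or_ne l k with rfl | hl <;> simp [updateFstSnd, *]
  exact Matrix.detRowAlternating.map_eq_zero_of_eq_smul hpq _ (hvert p hp) (hvert q hq)

theorem detFst_graph (γ : (ι → R) →ₗ[R] κ → R) :
    detFst R ι κ (fun j => (Pi.basisFun R ι j, γ (Pi.basisFun R ι j))) = 1 := by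
  rw [detFst, compLinearMap_apply, ← Pi.basisFun_det]
  exact (Pi.basisFun R ι).det_self

theorem detUpdateFstSnd_graph (k : ι) (a : κ) (γ : (ι → R) →ₗ[R] κ → R) :
    detUpdateFstSnd R k a (fun j => (Pi.basisFun R ι j, γ (Pi.basisFun R ι j))) =
      γ (Pi.basisFun R ι k) a := by
  have hrows : (fun j => updateFstSnd k a (Pi.basisFun R ι j, γ (Pi.basisFun R ι j))) =
      (1 : Matrix ι ι R).updateCol k fun j => γ (Pi.basisFun R ι j) a := by
    ext j l
    rcases eq_or_ne l k with rfl | hl <;> simp [updateFstSnd, Matrix.one_eq_pi_single, *]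
  rw [detUpdateFstSnd, compLinearMap_apply, hrows]
  exact (Matrix.cramer_apply _ _ k).symm.trans (by rw [Matrix.cramer_one]; rfl)

variable [Fintype κ]

noncomputable def ofAffineMap (g : ((ι → R) →ₗ[R] κ → R) →ᵃ[R] R) :
    ((ι → R) × (κ → R)) [⋀^ι]→ₗ[R] R :=
  g 0 • detFst R ι κ + ∑ p : κ × ι,
    g.linear ((Pi.basisFun R ι).linearMap (Pi.basisFun R κ) p) • detUpdateFstSnd R p.2 p.1

theorem ofAffineMap_mem_twoHorizontal (g : ((ι → R) →ₗ[R] κ → R) →ᵃ[R] R) :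
    ofAffineMap g ∈ twoHorizontal :=
  add_mem (Submodule.smul_mem _ _ detFst_mem_twoHorizontal)
    (sum_mem fun p _ => Submodule.smul_mem _ _ (detUpdateFstSnd_mem_twoHorizontal p.2 p.1))

theorem ofAffineMap_graph (g : ((ι → R) →ₗ[R] κ → R) →ᵃ[R] R) (γ : (ι → R) →ₗ[R] κ → R) :
    ofAffineMap g (fun j => (Pi.basisFun R ι j, γ (Pi.basisFun R ι j))) = g γ := by
  set B := (Pi.basisFun R ι).linearMap (Pi.basisFun R κ)
  have hL : g.linear γ = ∑ p, g.linear (B p) * γ (Pi.basisFun R ι p.2) p.1 := by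
    conv_lhs => rw [← B.sum_repr γ]
    rw [map_sum]
    refine sum_congr rfl fun p _ => ?_
    rw [map_smul, smul_eq_mul, mul_comm]
    simp [B, Matrix.stdBasis, LinearMap.toMatrix_apply]
  rw [ofAffineMap, add_apply, smul_apply, detFst_graph, finset_sum_apply,
    congrFun g.decomp γ, Pi.add_apply, hL]
  simp only [smul_apply, detUpdateFstSnd_graph, smul_eq_mul, mul_one, add_comm]
  rfl

end Coordinates

end AlternatingMap

/-- Fibrewise model at `u ∈ E`: `T_uE = ℝ^{m+1} × ℝⁿ` with vertical factor `ℝⁿ`, `η = det`, and a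
jet `j¹_x φ` at `u` is the linear map `γ : ℝ^{m+1} → ℝⁿ` with `Tφ v = (v, γ v)`. -/
theorem stmt13 (m n : ℕ) :
    ∃! Ψ : {ω : ((Fin (m+1) → ℝ) × (Fin n → ℝ)) [⋀^Fin (m+1)]→ₗ[ℝ] ℝ //
        ∀ X : Fin (m+1) → ((Fin (m+1) → ℝ) × (Fin n → ℝ)),
          (∃ a b : Fin (m+1), a ≠ b ∧ (X a).1 = 0 ∧ (X b).1 = 0) → ω X = 0} →
        (((Fin (m+1) → ℝ) →ₗ[ℝ] (Fin n → ℝ)) → ℝ),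
      (∀ ω (γ : (Fin (m+1) → ℝ) →ₗ[ℝ] (Fin n → ℝ))
          (v : Fin (m+1) → (Fin (m+1) → ℝ)),
        Ψ ω γ * Matrix.det (Matrix.of fun a b => v a b) =
          ω.1 (fun j => (v j, γ (v j)))) ∧
      Function.Injective Ψ ∧
      (∀ ω, ∃ g : ((Fin (m+1) → ℝ) →ₗ[ℝ] (Fin n → ℝ)) →ᵃ[ℝ] ℝ, Ψ ω = ⇑g) ∧
      (∀ g : ((Fin (m+1) → ℝ) →ₗ[ℝ] (Fin n → ℝ)) →ᵃ[ℝ] ℝ, ∃ ω, Ψ ω = ⇑g) := by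
  set e := Pi.basisFun ℝ (Fin (m+1))
  refine ⟨fun ω γ => ω.1 (fun j => (e j, γ (e j))),
    ⟨fun ω γ v => ?_, fun ω₁ ω₂ hΨ => ?_, fun ω => ?_, fun g => ?_⟩, fun Ψ hΨ => ?_⟩
  · rw [AlternatingMap.map_graph_eq_mul_det e, Pi.basisFun_det]
    rfl
  · exact Subtype.ext
      (AlternatingMap.eq_of_map_graph_eq e (Pi.basisFun ℝ _) ω₁.2 ω₂.2 (congrFun hΨ))
  · exact AlternatingMap.exists_affineMap_of_mem_twoHorizontal ω.2 e
  · exact ⟨⟨_, AlternatingMap.ofAffineMap_mem_twoHorizontal g⟩,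
      funext (AlternatingMap.ofAffineMap_graph g)⟩
  · have hdet : Matrix.det (Matrix.of fun a b => e a b) = 1 := by
      rw [← e.det_self, Pi.basisFun_det]
      rfl
    funext ω γ
    simpa [hdet] using hΨ.1 ω γ e
end

section
/- Let γ be a closed section of the bundle of 2-semibasic (m+1)-forms on E (a section of J¹π^† → E with dγ = 0), with coordinate components γ_p, γ^t_α, γ^i_α. Then the Hamilton–Jacobi condition d(h ∘ μ ∘ γ) = 0 holds if and only if, for every α, ∂H/∂u^α + (∂H/∂p^i_β)(∂γ^i_β/∂u^α) + (∂H/∂p^0_β)(∂γ^0_β/∂u^α) + ∂γ^i_α/∂x^i + ∂γ^0_α/∂t = 0, where all partial derivatives of H are evaluated along μ ∘ γ. -/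
open scoped BigOperators

noncomputable section

/-- Exterior derivative (alternation formula) of a form-valued function at a point,
on constant vector fields, in a trivialized model. -/
def extDer {P : Type*} [NormedAddCommGroup P] [NormedSpace ℝ P]
    {k : ℕ} (θ : P → (Fin k → P) → ℝ) (q : P) (X : Fin (k+1) → P) : ℝ :=
  ∑ j : Fin (k+1), (-1 : ℝ)^(j : ℕ) *
    fderiv ℝ (fun q' => θ q' (fun i => X (j.succAbove i))) q (X j)

/-- Coordinates `(t = x⁰, xⁱ, uᵅ)` on `E` (also its own tangent space). -/
abbrev Epts (m n : ℕ) := (Fin (m+1) → ℝ) × (Fin n → ℝ)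

/-- Coordinates `(xⁱ, uᵅ, pⁱᵅ)` on `M°π` (`p⁰ᵅ = p^t_α`). -/
abbrev MR (m n : ℕ) := (Fin (m+1) → ℝ) × (Fin n → ℝ) × (Fin (m+1) → Fin n → ℝ)

/-- `d^{m+1}x` on tangent vectors of `E`. -/
def vol (m n : ℕ) (X : Fin (m+1) → Epts m n) : ℝ :=
  Matrix.det (Matrix.of fun a b => (X a).1 b)

/-- `duᵅ ∧ dᵐx_i` on tangent vectors of `E`. -/
def wedgeUA (m n : ℕ) (i : Fin (m+1)) (α : Fin n)
    (X : Fin (m+1) → Epts m n) : ℝ :=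
  (-1:ℝ)^(i:ℕ) * Matrix.det (Matrix.of fun a b =>
    Fin.cases ((X a).2 α) (fun b' => (X a).1 (i.succAbove b')) b)

/-- The section `γ` of `J¹π^† ≅ Λ^{m+1}_2 E → E`, with components
`(γ_p, γⁱᵅ)` (`γ⁰ᵅ = γ⁰_α` being the `t`-component), as an `(m+1)`-form on `E`:
`γ = γ_p d^{m+1}x + γⁱᵅ duᵅ ∧ dᵐx_i`. -/
def gammaForm (m n : ℕ) (γp : Epts m n → ℝ)
    (γP : Epts m n → Fin (m+1) → Fin n → ℝ)
    (q : Epts m n) (X : Fin (m+1) → Epts m n) : ℝ :=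
  γp q * vol m n X + ∑ i : Fin (m+1), ∑ α : Fin n, γP q i α * wedgeUA m n i α X

/-- The `(m+1)`-form `h∘μ∘γ = -H(x, u, γ(x,u)) d^{m+1}x + γⁱᵅ duᵅ ∧ dᵐx_i` on `E`. -/
def hmuGamma (m n : ℕ) (H : MR m n → ℝ)
    (γP : Epts m n → Fin (m+1) → Fin n → ℝ)
    (q : Epts m n) (X : Fin (m+1) → Epts m n) : ℝ :=
  - H (q.1, q.2, γP q) * vol m n X +
    ∑ i : Fin (m+1), ∑ α : Fin n, γP q i α * wedgeUA m n i α X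

variable {m n : ℕ}

/-- base vectors for evaluation -/
def Xbase (m n : ℕ) (α : Fin n) : Fin (m+2) → Epts m n :=
  Fin.cases ((0 : Fin (m+1) → ℝ), Pi.single α 1) (fun k => (Pi.single k (1:ℝ), 0))

@[simp] lemma Xbase_zero (α : Fin n) : Xbase m n α 0 = ((0 : Fin (m+1) → ℝ), Pi.single α 1) := rfl
@[simp] lemma Xbase_succ (α : Fin n) (k : Fin (m+1)) :
    Xbase m n α k.succ = ((Pi.single k (1:ℝ) : Fin (m+1) → ℝ), (0 : Fin n → ℝ)) := by
  simp [Xbase]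

lemma vol_Xbase_zero (α : Fin n) :
    vol m n (fun i => Xbase m n α ((0 : Fin (m+2)).succAbove i)) = 1 := by
  have : (Matrix.of fun a b => ((Xbase m n α ((0 : Fin (m+2)).succAbove a)).1 b)) = (1 : Matrix (Fin (m+1)) (Fin (m+1)) ℝ) := by
    ext a b
    simp [Fin.succAbove_zero, Matrix.one_apply, Pi.single_apply, eq_comm]
  rw [vol, this, Matrix.det_one]

lemma vol_Xbase_succ (α : Fin n) (k : Fin (m+1)) :
    vol m n (fun i => Xbase m n α ((k.succ).succAbove i)) = 0 := by
  apply Matrix.det_eq_zero_of_row_eq_zero 0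
  intro j
  have h0 : (k.succ).succAbove 0 = 0 := by
    rw [Fin.succAbove_of_castSucc_lt]
    · rfl
    · simp [Fin.castSucc_zero]
  simp [h0]

lemma wedge_Xbase_zero (α : Fin n) (i : Fin (m+1)) (α' : Fin n) :
    wedgeUA m n i α' (fun a => Xbase m n α ((0 : Fin (m+2)).succAbove a)) = 0 := by
  rw [wedgeUA]
  rw [Matrix.det_eq_zero_of_column_eq_zero 0, mul_zero]
  intro a
  simp [Fin.succAbove_zero]

lemma wedge_Xbase_succ (α : Fin n) (k : Fin (m+1)) (i : Fin (m+1)) (α' : Fin n) :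
    wedgeUA m n i α' (fun a => Xbase m n α ((k.succ).succAbove a))
      = if i = k ∧ α' = α then (-1:ℝ)^(k:ℕ) else 0 := by
  have h0 : (k.succ).succAbove 0 = 0 := by
    rw [Fin.succAbove_of_castSucc_lt]
    · rfl
    · simp [Fin.castSucc_zero]
  have hsucc : ∀ c : Fin m, (k.succ).succAbove c.succ = (k.succAbove c).succ :=
    fun c => Fin.succ_succAbove_succ k c
  set N : Matrix (Fin (m+1)) (Fin (m+1)) ℝ := Matrix.of fun a b =>
    Fin.cases ((Xbase m n α ((k.succ).succAbove a)).2 α')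
      (fun b' => (Xbase m n α ((k.succ).succAbove a)).1 (i.succAbove b')) b with hN
  have hcol : ∀ c : Fin m, N c.succ 0 = 0 := by
    intro c
    simp [hN, hsucc c]
  have hdet : N.det = N 0 0 * (N.submatrix Fin.succ Fin.succ).det := by
    rw [Matrix.det_succ_column_zero, Fin.sum_univ_succ]
    simp [hcol, Fin.succAbove_zero]
  have hN00 : N 0 0 = if α' = α then 1 else 0 := by
    simp [hN, h0, Pi.single_apply]
  by_cases hα : α' = α
  · subst hα
    have hsub : ∀ (c b' : Fin m), N.submatrix Fin.succ Fin.succ c b'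
        = (Pi.single (k.succAbove c) (1:ℝ) : Fin (m+1) → ℝ) (i.succAbove b') := by
      intro c b'
      simp [hN, hsucc c]
    by_cases hik : i = k
    · subst hik
      have : (N.submatrix Fin.succ Fin.succ) = (1 : Matrix (Fin m) (Fin m) ℝ) := by
        ext c b'
        rw [hsub c b']
        simp [Matrix.one_apply, Pi.single_apply, Fin.succAbove_right_inj, eq_comm]
      rw [wedgeUA, ← hN, hdet, hN00, this, Matrix.det_one]
      simp
    · obtain ⟨c, hc⟩ := Fin.exists_succAbove_eq hik
      have : (N.submatrix Fin.succ Fin.succ).det = 0 := by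
        apply Matrix.det_eq_zero_of_row_eq_zero c
        intro b'
        rw [hsub c b', hc]
        simp [Pi.single_apply, Fin.succAbove_ne i b']
      rw [wedgeUA, ← hN, hdet, this, mul_zero, mul_zero]
      simp [hik]
  · rw [wedgeUA, ← hN, hdet, hN00, if_neg hα, zero_mul, mul_zero]
    simp [hα]

lemma volExpand (b : Fin (m+1)) (X : Fin (m+2) → Epts m n) :
    ∑ j : Fin (m+2), (-1:ℝ)^(j:ℕ) * ((X j).1 b * vol m n (fun i => X (j.succAbove i))) = 0 := by
  set M : Matrix (Fin (m+2)) (Fin (m+2)) ℝ := Matrix.of fun j c =>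
    Fin.cases ((X j).1 b) (fun c' => (X j).1 c') c with hM
  have hdet0 : M.det = 0 := by
    apply Matrix.det_zero_of_column_eq (Fin.succ_ne_zero b).symm
    intro j
    simp [hM]
  have hexp := Matrix.det_succ_column_zero M
  rw [hdet0] at hexp
  have : ∀ j : Fin (m+2), (-1:ℝ)^(j:ℕ) * ((X j).1 b * vol m n (fun i => X (j.succAbove i)))
      = (-1:ℝ)^(j:ℕ) * M j 0 * (M.submatrix j.succAbove Fin.succ).det := by
    intro j
    have h1 : M j 0 = (X j).1 b := by simp [hM]
    have h2 : (M.submatrix j.succAbove Fin.succ) = Matrix.of fun a c => (X (j.succAbove a)).1 c := by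
      ext a c
      simp [hM]
    rw [h1, h2, mul_assoc]
    rfl
  rw [Finset.sum_congr rfl (fun j _ => this j)]
  exact hexp.symm

lemma pi_decomp {k : ℕ} (v : Fin k → ℝ) :
    v = ∑ b : Fin k, v b • (Pi.single b (1:ℝ) : Fin k → ℝ) := by
  funext c
  simp [Finset.sum_apply, Pi.single_apply]

lemma pi2_decomp {k l : ℕ} (W : Fin k → Fin l → ℝ) :
    W = ∑ i : Fin k, ∑ β : Fin l,
        W i β • (Pi.single i (Pi.single β (1:ℝ) : Fin l → ℝ) : Fin k → Fin l → ℝ) := by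
  funext i' β'
  simp [Finset.sum_apply, Pi.single_apply, apply_ite (fun f : Fin l → ℝ => f β')]

lemma Epts_decomp (v : Epts m n) :
    v = (∑ b : Fin (m+1), v.1 b • (((Pi.single b (1:ℝ) : Fin (m+1) → ℝ)), (0 : Fin n → ℝ)))
      + ∑ α : Fin n, v.2 α • ((0 : Fin (m+1) → ℝ), (Pi.single α (1:ℝ) : Fin n → ℝ)) := by
  apply Prod.ext
  · simp only [Prod.fst_add, Prod.fst_sum, Prod.smul_fst, smul_zero, Finset.sum_const_zero,
      add_zero]
    exact pi_decomp v.1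
  · simp only [Prod.snd_add, Prod.snd_sum, Prod.smul_snd, smul_zero, Finset.sum_const_zero,
      zero_add]
    exact pi_decomp v.2

lemma clm_decomp (L : Epts m n →L[ℝ] ℝ) (v : Epts m n) :
    L v = (∑ b : Fin (m+1), v.1 b * L (Pi.single b 1, 0))
        + ∑ α : Fin n, v.2 α * L (0, Pi.single α 1) := by
  conv_lhs => rw [Epts_decomp v]
  rw [map_add, map_sum, map_sum]
  congr 1
  · exact Finset.sum_congr rfl fun b _ => by rw [map_smul]; rfl
  · exact Finset.sum_congr rfl fun b _ => by rw [map_smul]; rfl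

lemma clmMR_decomp (L : MR m n →L[ℝ] ℝ) (v2 : Fin n → ℝ) (W : Fin (m+1) → Fin n → ℝ) :
    L (0, v2, W) = L (0, v2, 0) + ∑ i, ∑ β, W i β * L (0, 0, Pi.single i (Pi.single β 1)) := by
  have hv : ((0 : Fin (m+1) → ℝ), v2, W)
      = ((0 : Fin (m+1) → ℝ), v2, (0 : Fin (m+1) → Fin n → ℝ))
        + ∑ i : Fin (m+1), ∑ β : Fin n,
            W i β • (((0 : Fin (m+1) → ℝ), (0 : Fin n → ℝ),
              (Pi.single i (Pi.single β (1:ℝ) : Fin n → ℝ) : Fin (m+1) → Fin n → ℝ))) := by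
    apply Prod.ext
    · simp [Prod.fst_sum, Prod.smul_fst]
    apply Prod.ext
    · simp [Prod.fst_sum, Prod.smul_fst, Prod.snd_sum, Prod.smul_snd]
    · simp only [Prod.snd_add, Prod.snd_sum, Prod.smul_snd, Prod.fst_sum, Prod.smul_fst,
        smul_zero, Finset.sum_const_zero, zero_add]
      exact pi2_decomp W
  rw [hv, map_add, map_sum]
  congr 1
  refine Finset.sum_congr rfl fun i _ => ?_
  rw [map_sum]
  exact Finset.sum_congr rfl fun β _ => by rw [map_smul]; rfl

lemma fderiv_form_apply (f : Epts m n → ℝ) (hf : Differentiable ℝ f)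
    (γP : Epts m n → Fin (m+1) → Fin n → ℝ)
    (hγP : ∀ i α, Differentiable ℝ fun q => γP q i α)
    (c : ℝ) (w : Fin (m+1) → Fin n → ℝ) (q v : Epts m n) :
    fderiv ℝ (fun q' => f q' * c + ∑ i, ∑ α, γP q' i α * w i α) q v
      = fderiv ℝ f q v * c + ∑ i, ∑ α, fderiv ℝ (fun q' => γP q' i α) q v * w i α := by
  have h1 : HasFDerivAt (fun q' => f q' * c + ∑ i, ∑ α, γP q' i α * w i α)
      (c • fderiv ℝ f q + ∑ i, ∑ α, w i α • fderiv ℝ (fun q' => γP q' i α) q) q := by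
    exact ((hf q).hasFDerivAt.mul_const c).add
      (HasFDerivAt.fun_sum fun i _ => HasFDerivAt.fun_sum fun α _ =>
        ((hγP i α q).hasFDerivAt.mul_const (w i α)))
  rw [h1.fderiv]
  simp [ContinuousLinearMap.sum_apply, smul_eq_mul, mul_comm]

lemma extDer_form (f : Epts m n → ℝ) (hf : Differentiable ℝ f)
    (γP : Epts m n → Fin (m+1) → Fin n → ℝ)
    (hγP : ∀ i α, Differentiable ℝ fun q => γP q i α)
    (q : Epts m n) (X : Fin (m+2) → Epts m n) :
    extDer (fun q' X' => f q' * vol m n X' + ∑ i, ∑ α, γP q' i α * wedgeUA m n i α X') q X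
      = ∑ j : Fin (m+2), (-1:ℝ)^(j:ℕ) *
          (fderiv ℝ f q (X j) * vol m n (fun i' => X (j.succAbove i'))
           + ∑ i, ∑ α, fderiv ℝ (fun q' => γP q' i α) q (X j)
               * wedgeUA m n i α (fun i' => X (j.succAbove i'))) := by
  unfold extDer
  refine Finset.sum_congr rfl fun j _ => ?_
  congr 1
  exact fderiv_form_apply f hf γP hγP _ _ q (X j)

lemma extDer_form_eval (f : Epts m n → ℝ) (hf : Differentiable ℝ f)
    (γP : Epts m n → Fin (m+1) → Fin n → ℝ)
    (hγP : ∀ i α, Differentiable ℝ fun q => γP q i α)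
    (q : Epts m n) (α : Fin n) :
    extDer (fun q' X' => f q' * vol m n X' + ∑ i, ∑ β, γP q' i β * wedgeUA m n i β X') q
        (Xbase m n α)
      = fderiv ℝ f q ((0 : Fin (m+1) → ℝ), Pi.single α 1)
        - ∑ k : Fin (m+1), fderiv ℝ (fun q' => γP q' k α) q (Pi.single k 1, 0) := by
  rw [extDer_form f hf γP hγP q (Xbase m n α), Fin.sum_univ_succ]
  have hzero : (-1:ℝ)^((0 : Fin (m+2)):ℕ) *
      (fderiv ℝ f q (Xbase m n α 0) * vol m n (fun i' => Xbase m n α ((0:Fin (m+2)).succAbove i'))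
        + ∑ i, ∑ β, fderiv ℝ (fun q' => γP q' i β) q (Xbase m n α 0)
            * wedgeUA m n i β (fun i' => Xbase m n α ((0:Fin (m+2)).succAbove i')))
      = fderiv ℝ f q ((0 : Fin (m+1) → ℝ), Pi.single α 1) := by
    rw [vol_Xbase_zero]
    simp only [Fin.val_zero, pow_zero, one_mul, Xbase_zero, mul_one]
    rw [Finset.sum_eq_zero, add_zero]
    intro i _
    rw [Finset.sum_eq_zero]
    intro β _
    rw [wedge_Xbase_zero, mul_zero]
  rw [hzero]
  have hsucc : ∀ k : Fin (m+1), (-1:ℝ)^((k.succ : Fin (m+2)):ℕ) *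
      (fderiv ℝ f q (Xbase m n α k.succ)
          * vol m n (fun i' => Xbase m n α ((k.succ).succAbove i'))
        + ∑ i, ∑ β, fderiv ℝ (fun q' => γP q' i β) q (Xbase m n α k.succ)
            * wedgeUA m n i β (fun i' => Xbase m n α ((k.succ).succAbove i')))
      = - fderiv ℝ (fun q' => γP q' k α) q (Pi.single k 1, 0) := by
    intro k
    rw [vol_Xbase_succ, mul_zero, zero_add]
    have hsum : (∑ i, ∑ β, fderiv ℝ (fun q' => γP q' i β) q (Xbase m n α k.succ)
            * wedgeUA m n i β (fun i' => Xbase m n α ((k.succ).succAbove i')))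
        = fderiv ℝ (fun q' => γP q' k α) q (Xbase m n α k.succ) * (-1:ℝ)^(k:ℕ) := by
      have : ∀ i β, wedgeUA m n i β (fun i' => Xbase m n α ((k.succ).succAbove i'))
          = if i = k ∧ β = α then (-1:ℝ)^(k:ℕ) else 0 := fun i β => wedge_Xbase_succ α k i β
    
      simp only [this, ite_and, mul_ite, mul_zero]
      simp [Finset.sum_ite_eq']
    rw [hsum, Xbase_succ, Fin.val_succ]
    have hp : (-1:ℝ)^((k:ℕ)*2) = 1 := by rw [pow_mul', neg_one_sq, one_pow]
    ring_nf
    rw [hp, mul_one]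
  rw [Finset.sum_congr rfl (fun k _ => hsucc k), Finset.sum_neg_distrib]
  ring

lemma sumVol (L : Epts m n →L[ℝ] ℝ) (X : Fin (m+2) → Epts m n) :
    ∑ j : Fin (m+2), (-1:ℝ)^(j:ℕ) * (L (X j) * vol m n (fun i => X (j.succAbove i)))
      = ∑ α : Fin n, L ((0:Fin (m+1) → ℝ), Pi.single α 1) *
          (∑ j : Fin (m+2), (-1:ℝ)^(j:ℕ) *
            ((X j).2 α * vol m n (fun i => X (j.succAbove i)))) := by
  have step : ∀ j : Fin (m+2), (-1:ℝ)^(j:ℕ) * (L (X j) * vol m n (fun i => X (j.succAbove i)))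
      = (∑ b : Fin (m+1), L (Pi.single b 1, 0) *
            ((-1:ℝ)^(j:ℕ) * ((X j).1 b * vol m n (fun i => X (j.succAbove i)))))
        + ∑ α : Fin n, L ((0:Fin (m+1) → ℝ), Pi.single α 1) *
            ((-1:ℝ)^(j:ℕ) * ((X j).2 α * vol m n (fun i => X (j.succAbove i)))) := by
    intro j
    rw [clm_decomp L (X j), add_mul, mul_add, Finset.sum_mul, Finset.sum_mul, Finset.mul_sum, Finset.mul_sum]
    congr 1
    · exact Finset.sum_congr rfl fun b _ => by ring
    · exact Finset.sum_congr rfl fun α _ => by ring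
  rw [Finset.sum_congr rfl fun j _ => step j, Finset.sum_add_distrib]
  have h1 : (∑ j : Fin (m+2), ∑ b : Fin (m+1), L (Pi.single b 1, 0) *
      ((-1:ℝ)^(j:ℕ) * ((X j).1 b * vol m n (fun i => X (j.succAbove i))))) = 0 := by
    rw [Finset.sum_comm]
    apply Finset.sum_eq_zero
    intro b _
    rw [← Finset.mul_sum, volExpand b X, mul_zero]
  have h2 : (∑ j : Fin (m+2), ∑ α : Fin n, L ((0:Fin (m+1) → ℝ), Pi.single α 1) *
      ((-1:ℝ)^(j:ℕ) * ((X j).2 α * vol m n (fun i => X (j.succAbove i)))))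
      = ∑ α : Fin n, L ((0:Fin (m+1) → ℝ), Pi.single α 1) *
          (∑ j : Fin (m+2), (-1:ℝ)^(j:ℕ) *
            ((X j).2 α * vol m n (fun i => X (j.succAbove i)))) := by
    rw [Finset.sum_comm]
    exact Finset.sum_congr rfl fun α _ => (Finset.mul_sum _ _ _).symm
  rw [h1, h2, zero_add]

lemma fderiv_Hc (H : MR m n → ℝ) (hH : ContDiff ℝ (⊤ : ℕ∞) H)
    (γP : Epts m n → Fin (m+1) → Fin n → ℝ)
    (hγP : ∀ i α, Differentiable ℝ fun q => γP q i α)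
    (q v : Epts m n) :
    fderiv ℝ (fun q' : Epts m n => H (q'.1, q'.2, γP q')) q v
      = fderiv ℝ H (q.1, q.2, γP q)
          (v.1, v.2, fun i β => fderiv ℝ (fun q' => γP q' i β) q v) := by
  have hP : HasFDerivAt (fun q' : Epts m n => γP q')
      (ContinuousLinearMap.pi fun i => ContinuousLinearMap.pi fun β =>
        fderiv ℝ (fun q' => γP q' i β) q) q :=
    hasFDerivAt_pi.mpr fun i => hasFDerivAt_pi.mpr fun β => (hγP i β q).hasFDerivAt
  have hG : HasFDerivAt (fun q' : Epts m n => ((q'.1, q'.2, γP q') : MR m n))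
      ((ContinuousLinearMap.fst ℝ (Fin (m+1) → ℝ) (Fin n → ℝ)).prod
        ((ContinuousLinearMap.snd ℝ (Fin (m+1) → ℝ) (Fin n → ℝ)).prod
          (ContinuousLinearMap.pi fun i => ContinuousLinearMap.pi fun β =>
            fderiv ℝ (fun q' => γP q' i β) q))) q :=
    HasFDerivAt.prodMk hasFDerivAt_fst (HasFDerivAt.prodMk hasFDerivAt_snd hP)
  have hHd : DifferentiableAt ℝ H ((q.1, q.2, γP q) : MR m n) :=
    (hH.differentiable (by simp)).differentiableAt
  have hc : HasFDerivAt (fun q' : Epts m n => H (q'.1, q'.2, γP q'))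
      ((fderiv ℝ H ((q.1, q.2, γP q) : MR m n)).comp
        ((ContinuousLinearMap.fst ℝ (Fin (m+1) → ℝ) (Fin n → ℝ)).prod
          ((ContinuousLinearMap.snd ℝ (Fin (m+1) → ℝ) (Fin n → ℝ)).prod
            (ContinuousLinearMap.pi fun i => ContinuousLinearMap.pi fun β =>
              fderiv ℝ (fun q' => γP q' i β) q)))) q :=
    hHd.hasFDerivAt.comp q hG
  rw [hc.fderiv]
  rfl

/-- Lemma of \cite{LeMaMa09}: for a closed section `γ` of
`J¹π^† → E`, the Hamilton–Jacobi condition `d(h∘μ∘γ) = 0` holds iff, for every `α`,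
`∂H/∂uᵅ + (∂H/∂pⁱᵝ)(∂γⁱᵝ/∂uᵅ) + ∂γⁱᵅ/∂xⁱ = 0`
(the sums over `i` running over `0,…,m`, i.e. including the `t = x⁰` terms
`(∂H/∂p⁰ᵝ)(∂γ⁰ᵝ/∂uᵅ)` and `∂γ⁰ᵅ/∂t`), where the derivatives of `H` are evaluated
along `μ∘γ`. -/
theorem stmt18 (m n : ℕ) (H : MR m n → ℝ) (hH : ContDiff ℝ (⊤ : ℕ∞) H)
    (γp : Epts m n → ℝ) (γP : Epts m n → Fin (m+1) → Fin n → ℝ)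
    (hγp : Differentiable ℝ γp)
    (hγP : ∀ (i : Fin (m+1)) (α : Fin n), Differentiable ℝ (fun q => γP q i α))
    (hclosed : ∀ (q : Epts m n) (X : Fin (m+2) → Epts m n),
      extDer (gammaForm m n γp γP) q X = 0) :
    (∀ (q : Epts m n) (X : Fin (m+2) → Epts m n),
      extDer (hmuGamma m n H γP) q X = 0) ↔
    (∀ (q : Epts m n) (α : Fin n),
      fderiv ℝ H (q.1, q.2, γP q) (0, Pi.single α 1, 0) +
      (∑ i : Fin (m+1), ∑ β : Fin n,
        fderiv ℝ H (q.1, q.2, γP q) (0, 0, Pi.single i (Pi.single β 1)) *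
          fderiv ℝ (fun q' => γP q' i β) q (0, Pi.single α 1)) +
      (∑ i : Fin (m+1),
        fderiv ℝ (fun q' => γP q' i α) q (Pi.single i 1, 0)) = 0) := by
  -- differentiability of q ↦ -H(q.1,q.2,γP q)
  have hGd : Differentiable ℝ (fun q' : Epts m n => ((q'.1, q'.2, γP q') : MR m n)) := by
    apply Differentiable.prodMk differentiable_fst
    apply Differentiable.prodMk differentiable_snd
    apply differentiable_pi.mpr
    intro i
    exact differentiable_pi.mpr fun β => hγP i β
  have hHc : Differentiable ℝ (fun q' : Epts m n => H (q'.1, q'.2, γP q')) :=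
    (hH.differentiable (by simp)).comp hGd
  have hnegH : Differentiable ℝ (fun q' : Epts m n => - H (q'.1, q'.2, γP q')) := hHc.neg
  -- closedness relation: ∂γp/∂uᵅ = ∑ₖ ∂γᵏᵅ/∂xᵏ
  have keyClosed : ∀ (q : Epts m n) (α : Fin n),
      fderiv ℝ γp q ((0 : Fin (m+1) → ℝ), Pi.single α 1)
        = ∑ k : Fin (m+1), fderiv ℝ (fun q' => γP q' k α) q (Pi.single k 1, 0) := by
    intro q α
    have h1 := hclosed q (Xbase m n α)
    have h2 : extDer (gammaForm m n γp γP) q (Xbase m n α)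
        = fderiv ℝ γp q ((0 : Fin (m+1) → ℝ), Pi.single α 1)
          - ∑ k : Fin (m+1), fderiv ℝ (fun q' => γP q' k α) q (Pi.single k 1, 0) :=
      extDer_form_eval γp hγp γP hγP q α
    rw [h1] at h2
    linarith
  -- value of d(-H∘μ∘γ) in a u-direction
  have keyVal : ∀ (q : Epts m n) (α : Fin n),
      fderiv ℝ (fun q' : Epts m n => - H (q'.1, q'.2, γP q')) q
          ((0 : Fin (m+1) → ℝ), Pi.single α 1)
        = - (fderiv ℝ H (q.1, q.2, γP q) (0, Pi.single α 1, 0) +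
            ∑ i : Fin (m+1), ∑ β : Fin n,
              fderiv ℝ H (q.1, q.2, γP q) (0, 0, Pi.single i (Pi.single β 1)) *
                fderiv ℝ (fun q' => γP q' i β) q (0, Pi.single α 1)) := by
    intro q α
    have hneg : fderiv ℝ (fun q' : Epts m n => - H (q'.1, q'.2, γP q')) q
        = - fderiv ℝ (fun q' : Epts m n => H (q'.1, q'.2, γP q')) q := by
      exact fderiv_neg
    rw [hneg, ContinuousLinearMap.neg_apply, neg_inj]
    rw [fderiv_Hc H hH γP hγP q ((0 : Fin (m+1) → ℝ), Pi.single α 1)]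
    have := clmMR_decomp (fderiv ℝ H ((q.1, q.2, γP q) : MR m n)) (Pi.single α 1)
      (fun i β => fderiv ℝ (fun q' => γP q' i β) q ((0 : Fin (m+1) → ℝ), Pi.single α 1))
    rw [this]
    congr 1
    exact Finset.sum_congr rfl fun i _ => Finset.sum_congr rfl fun β _ => by ring
  constructor
  · intro h q α
    have h1 := h q (Xbase m n α)
    have h2 : extDer (hmuGamma m n H γP) q (Xbase m n α)
        = fderiv ℝ (fun q' : Epts m n => - H (q'.1, q'.2, γP q')) q
            ((0 : Fin (m+1) → ℝ), Pi.single α 1)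
          - ∑ k : Fin (m+1), fderiv ℝ (fun q' => γP q' k α) q (Pi.single k 1, 0) :=
      extDer_form_eval (fun q' : Epts m n => - H (q'.1, q'.2, γP q')) hnegH γP hγP q α
    rw [h1, keyVal q α] at h2
    linarith
  · intro h q X
    have e1 : extDer (hmuGamma m n H γP) q X
        = ∑ j : Fin (m+2), (-1:ℝ)^(j:ℕ) *
            (fderiv ℝ (fun q' : Epts m n => - H (q'.1, q'.2, γP q')) q (X j)
                * vol m n (fun i' => X (j.succAbove i'))
              + ∑ i, ∑ α, fderiv ℝ (fun q' => γP q' i α) q (X j)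
                  * wedgeUA m n i α (fun i' => X (j.succAbove i'))) :=
      extDer_form (fun q' : Epts m n => - H (q'.1, q'.2, γP q')) hnegH γP hγP q X
    have e2 : extDer (gammaForm m n γp γP) q X
        = ∑ j : Fin (m+2), (-1:ℝ)^(j:ℕ) *
            (fderiv ℝ γp q (X j) * vol m n (fun i' => X (j.succAbove i'))
              + ∑ i, ∑ α, fderiv ℝ (fun q' => γP q' i α) q (X j)
                  * wedgeUA m n i α (fun i' => X (j.succAbove i'))) :=
      extDer_form γp hγp γP hγP q X
    have e3 : ∀ α : Fin n,
        fderiv ℝ (fun q' : Epts m n => - H (q'.1, q'.2, γP q')) q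
            ((0 : Fin (m+1) → ℝ), Pi.single α 1)
          = fderiv ℝ γp q ((0 : Fin (m+1) → ℝ), Pi.single α 1) := by
      intro α
      rw [keyVal q α, keyClosed q α]
      have := h q α
      linarith
    have ediff : extDer (hmuGamma m n H γP) q X - extDer (gammaForm m n γp γP) q X = 0 := by
      rw [e1, e2, ← Finset.sum_sub_distrib]
      have hterm : ∀ j : Fin (m+2), (-1:ℝ)^(j:ℕ) *
            (fderiv ℝ (fun q' : Epts m n => - H (q'.1, q'.2, γP q')) q (X j)
                * vol m n (fun i' => X (j.succAbove i'))
              + ∑ i, ∑ α, fderiv ℝ (fun q' => γP q' i α) q (X j)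
                  * wedgeUA m n i α (fun i' => X (j.succAbove i')))
          - (-1:ℝ)^(j:ℕ) *
            (fderiv ℝ γp q (X j) * vol m n (fun i' => X (j.succAbove i'))
              + ∑ i, ∑ α, fderiv ℝ (fun q' => γP q' i α) q (X j)
                  * wedgeUA m n i α (fun i' => X (j.succAbove i')))
          = (-1:ℝ)^(j:ℕ) *
              (fderiv ℝ (fun q' : Epts m n => - H (q'.1, q'.2, γP q')) q (X j)
                * vol m n (fun i' => X (j.succAbove i')))
            - (-1:ℝ)^(j:ℕ) *
              (fderiv ℝ γp q (X j) * vol m n (fun i' => X (j.succAbove i'))) := by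
        intro j
        ring
      rw [Finset.sum_congr rfl fun j _ => hterm j, Finset.sum_sub_distrib,
        sumVol (fderiv ℝ (fun q' : Epts m n => - H (q'.1, q'.2, γP q')) q) X,
        sumVol (fderiv ℝ γp q) X, ← Finset.sum_sub_distrib]
      apply Finset.sum_eq_zero
      intro α _
      rw [e3 α]
      ring
    have hg := hclosed q X
    linarith


end
end
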